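/- Let N > 5 and p with max{1, 4/(N-4)} < p < (N+1)/(N-3). Set L = p/(p+1) - 4/N and α = (N - NL - NLp)/(1 + N - pLN). Then (p(1-α)+1)·p/(p+1) < 1, i.e., the exponent θ := (p+1)/(p(p(1-α)+1)) satisfies θ > 1. -/
import Mathlib


theorem stmt_5 (N p L α : ℝ) (hN : N > 5) (hp1 : 1 < p) (hp2 : 4 / (N - 4) < p)
    (hp3 : p < (N + 1) / (N - 3))
    (hL : L = p / (p + 1) - 4 / N)
    (hα : α = (N - N * L - N * L * p) / (1 + N - p * L * N)) :
    (p * (1 - α) + 1) * p / (p + 1) < 1 := by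
  have hN3 : N - 3 > 0 := by linarith
  have hN0 : N > 0 := by linarith
  have hp0 : p > 0 := by linarith
  have hpp1 : p + 1 > 0 := by linarith
  have hp3' : (N - 3) * p < N + 1 := by
    rw [lt_div_iff₀ hN3] at hp3; linarith
  have hQ : (4 - N) * p ^ 2 + (N + 5) * p + (N + 1) > 0 := by
    nlinarith [mul_pos (sub_pos.mpr hp3') hp0]
  have hD : 1 + N - p * L * N > 0 := by
    have : 1 + N - p * L * N = ((4 - N) * p ^ 2 + (N + 5) * p + (N + 1)) / (p + 1) := by
      rw [hL]; field_simp; ring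
    rw [this]
    positivity
  have key : p ^ 2 - 1 < p ^ 2 * α := by
    rw [hα, ← mul_div_assoc, lt_div_iff₀ hD, hL]
    have hx := mul_pos (sub_pos.mpr hp3') hpp1
    have e1 : p ^ 2 * (N - N * (p / (p + 1) - 4 / N) - N * (p / (p + 1) - 4 / N) * p)
        - (p ^ 2 - 1) * (1 + N - p * (p / (p + 1) - 4 / N) * N)
        = (3 - N) * p ^ 2 + 4 * p + (N + 1) := by
      field_simp; ring
    nlinarith [e1, hx]
  rw [div_lt_one hpp1]
  nlinarith [key]
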